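/- The equation u'' + [u² + (u + u')² − 1]·u' + u = 0 has at least one non-constant periodic solution: there exist a twice continuously differentiable function u₀ : ℝ → ℝ and τ₀ > 0 with u₀''(t) + (u₀(t)² + (u₀(t) + u₀'(t))² − 1)·u₀'(t) + u₀(t) = 0 for all t, u₀(t + τ₀) = u₀(t) for all t, and u₀ not constant. Indeed, the functions φ(x,y) = x² + (x+y)² − 1 and ψ(x) = x satisfy the Levinson–Smith conditions C_LS with x₀ = 1, M = 1 and x₁ = 1 + 60^{1/3}. -/

import Mathlib

open Set Filter MeasureTheory intervalIntegral

/-- The Levinson–Smith conditions `C_LS` with explicit witnesses `x₀ < x₁` and `M`. -/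
def LevinsonSmithWith (φ : ℝ → ℝ → ℝ) (ψ : ℝ → ℝ) (x₀ x₁ M : ℝ) : Prop :=
  (∀ x : ℝ, x ≠ 0 → 0 < x * ψ x) ∧
  Tendsto (fun x : ℝ => ∫ s in (0:ℝ)..x, ψ s) atTop atTop ∧
  φ 0 0 < 0 ∧
  0 < x₀ ∧ x₀ < x₁ ∧ 0 < M ∧
  (∀ x y : ℝ, x₀ ≤ |x| → 0 ≤ φ x y) ∧
  (∀ x y : ℝ, |x| ≤ x₀ → -M ≤ φ x y) ∧
  (∀ y : ℝ → ℝ, StrictAntiOn y (Set.Icc x₀ x₁) → (∀ x ∈ Set.Icc x₀ x₁, 0 < y x) →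
    10 * M * x₀ ≤ ∫ x in x₀..x₁, φ x (y x))

/-!
In the phase plane the equation is `u' = y`, `y' = -u - φ(u, y) y`, where
`φ(u, y) = u² + (u + y)² - 1`. Since `(u² + y²)' = -2 φ y²`, with `φ > 0` on the circle `r = 2`
and `φ < 0` on `r = 1/2`, the annulus `1/2 ≤ r ≤ 2` is forward invariant. The orbit from `(0, a)`,
`a ∈ [1/2, 2]`, sweeps through the right half-plane (`y - u` decreases at a fixed rate in the
first quadrant, `y + 8u` in the fourth) and returns to the `y`-axis at some `(0, -h(a))` with
`h(a) ∈ [1/2, 2]`. The return is transversal, so `h` is continuous and has a fixed point `a`.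
The system is odd, so `-γ(t + T)` is again a solution; at the fixed point it starts at `(0, a)`
like `γ`, hence `γ` is antiperiodic, so periodic. The Levinson–Smith conditions follow from
`φ(x, y) ≥ 2x² - 1` for `x ≥ 1`, `y > 0`.
-/

open Topology NNReal

section RealFunctions

variable {f f' : ℝ → ℝ} {a b c δ C : ℝ}

theorem le_add_mul_of_hasDerivAt_le (hab : a ≤ b) (hf : ∀ t ∈ Icc a b, HasDerivAt f (f' t) t)
    (hC : ∀ t ∈ Ico a b, f' t ≤ C) : f b ≤ f a + C * (b - a) :=
  image_le_of_deriv_right_le_deriv_boundary (B := fun t => f a + C * (t - a)) (B' := fun _ => C)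
    (HasDerivAt.continuousOn hf) (fun t ht => (hf t (Ico_subset_Icc_self ht)).hasDerivWithinAt)
    (by simp) (by fun_prop)
    (fun t _ => by simpa using (((hasDerivAt_id t).sub_const a).const_mul C).const_add (f a)
      |>.hasDerivWithinAt)
    hC ⟨hab, le_rfl⟩

theorem add_mul_le_of_le_hasDerivAt (hab : a ≤ b) (hf : ∀ t ∈ Icc a b, HasDerivAt f (f' t) t)
    (hC : ∀ t ∈ Ico a b, C ≤ f' t) : f a + C * (b - a) ≤ f b := by
  have := le_add_mul_of_hasDerivAt_le (f := -f) (C := -C) hab (fun t ht => (hf t ht).neg)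
    (fun t ht => neg_le_neg (hC t ht))
  simp only [Pi.neg_apply] at this
  linarith

/-- The fencing theorems of `Mathlib.Analysis.Calculus.MeanValue` need a strict inequality at
the boundary; fence by `c + r (t - a)` instead and let `r → 0`. -/
theorem le_of_hasDerivAt_nonpos_on_band (hδ : 0 < δ) (hf : ∀ t ∈ Icc a b, HasDerivAt f (f' t) t)
    (ha : f a ≤ c) (hband : ∀ t ∈ Ico a b, f t ∈ Icc c (c + δ) → f' t ≤ 0) :
    ∀ t ∈ Icc a b, f t ≤ c := by
  intro x hx
  have hba : 0 < b - a + 1 := by linarith [hx.1.trans hx.2]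
  have fence : ∀ r ∈ Ioo 0 (δ / (b - a + 1)), f x ≤ c + r * (x - a) := by
    intro r hr
    have hrδ : r * (b - a) < δ := by
      have := (lt_div_iff₀ hba).1 hr.2
      nlinarith [hr.1]
    refine image_le_of_deriv_right_lt_deriv_boundary (B := fun t => c + r * (t - a))
      (B' := fun _ => r) (HasDerivAt.continuousOn hf)
      (fun t ht => (hf t (Ico_subset_Icc_self ht)).hasDerivWithinAt) (by simpa using ha)
      (fun t => by simpa using (((hasDerivAt_id t).sub_const a).const_mul r).const_add c)
      (fun t ht hft => ?_) hx
    have : r * (t - a) ≤ δ := by nlinarith [ht.1, ht.2, hr.1]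
    have hmem : f t ∈ Icc c (c + δ) := ⟨by rw [hft]; nlinarith [ht.1, hr.1], by rw [hft]; linarith⟩
    exact (hband t ht hmem).trans_lt hr.1
  have hcl : (0 : ℝ) ∈ closure (Ioo 0 (δ / (b - a + 1))) := by
    have : 0 < δ / (b - a + 1) := by positivity
    rw [closure_Ioo this.ne]; exact left_mem_Icc.2 this.le
  have hB : ContinuousWithinAt (fun r : ℝ => c + r * (x - a)) (Ioo 0 (δ / (b - a + 1))) 0 := by
    fun_prop
  simpa using continuousWithinAt_const.closure_le hcl hB fence

theorem ge_of_hasDerivAt_nonneg_on_band (hδ : 0 < δ)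
    (hf : ∀ t ∈ Icc a b, HasDerivAt f (f' t) t)
    (ha : c ≤ f a) (hband : ∀ t ∈ Ico a b, f t ∈ Icc (c - δ) c → 0 ≤ f' t) :
    ∀ t ∈ Icc a b, c ≤ f t := by
  intro t ht
  have := le_of_hasDerivAt_nonpos_on_band (f := -f) (c := -c) hδ (fun t ht => (hf t ht).neg)
    (neg_le_neg ha) (fun t ht hft => neg_nonpos.2 <| hband t ht <| by
      simp only [Pi.neg_apply, mem_Icc] at hft; exact ⟨by linarith, by linarith⟩) t ht
  simpa using this

end RealFunctions

section Sign

variable {f : ℝ → ℝ} {f' x : ℝ}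

theorem HasDerivAt.nonpos_of_eventually_pos_left (hf : HasDerivAt f f' x) (hx : f x = 0)
    (h : ∀ᶠ t in 𝓝[<] x, 0 < f t) : f' ≤ 0 := by
  refine le_of_tendsto ((hasDerivAt_iff_tendsto_slope.mp hf).mono_left (nhdsLT_le_nhdsNE x)) ?_
  filter_upwards [h, self_mem_nhdsWithin] with t hft htx
  rw [slope_def_field, hx, sub_zero]
  exact div_nonpos_of_nonneg_of_nonpos hft.le (sub_neg.2 htx).le

theorem HasDerivAt.eventually_neg_right (hf : HasDerivAt f f' x) (hx : f x = 0) (h : f' < 0) :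
    ∀ᶠ t in 𝓝[>] x, f t < 0 := by
  have hslope := (hasDerivAt_iff_tendsto_slope.mp hf).mono_left (nhdsGT_le_nhdsNE x)
  filter_upwards [hslope.eventually_lt_const h, self_mem_nhdsWithin] with t hslope htx
  rw [slope_def_field, hx, sub_zero] at hslope
  rcases div_neg_iff.mp hslope with ⟨-, hneg⟩ | ⟨hft, -⟩
  · exact absurd hneg (sub_nonneg.2 (le_of_lt htx)).not_gt
  · exact hft

end Sign

/-- Junk value `sInf ∅ = 0` when `g` has no zero in `[α, β]`. -/
noncomputable def firstZero (g : ℝ → ℝ) (α β : ℝ) : ℝ := sInf (Icc α β ∩ g ⁻¹' {0})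

section FirstZero

variable {g : ℝ → ℝ} {α β s t : ℝ}

theorem firstZero_le (ht : t ∈ Icc α β) (hgt : g t = 0) : firstZero g α β ≤ t :=
  csInf_le ⟨α, fun _ hs => hs.1.1⟩ ⟨ht, hgt⟩

theorem firstZero_mem (hg : ContinuousOn g (Icc α β)) (h : ∃ t ∈ Icc α β, g t = 0) :
    firstZero g α β ∈ Icc α β ∧ g (firstZero g α β) = 0 := by
  obtain ⟨t, ht, hgt⟩ := h
  exact (hg.preimage_isClosed_of_isClosed isClosed_Icc isClosed_singleton).csInf_mem
    ⟨t, ht, hgt⟩ ⟨α, fun _ hs => hs.1.1⟩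

theorem exists_zero_of_nonpos (hg : ContinuousOn g (Icc α β)) (hα : 0 < g α)
    (ht : t ∈ Icc α β) (hgt : g t ≤ 0) : ∃ z ∈ Icc α β, z ≤ t ∧ g z = 0 := by
  obtain ⟨z, hz, hgz⟩ := intermediate_value_Icc' ht.1 (hg.mono (Icc_subset_Icc_right ht.2))
    ⟨hgt, hα.le⟩
  exact ⟨z, ⟨hz.1, hz.2.trans ht.2⟩, hz.2, hgz⟩

theorem pos_of_lt_firstZero (hg : ContinuousOn g (Icc α β)) (hα : 0 < g α)
    (ht : t ∈ Icc α β) (hlt : t < firstZero g α β) : 0 < g t := by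
  by_contra! hgt
  obtain ⟨z, hz, hzt, hgz⟩ := exists_zero_of_nonpos hg hα ht hgt
  exact (firstZero_le hz hgz).trans hzt |>.not_gt hlt

theorem lt_firstZero (hg : ContinuousOn g (Icc α β)) (h : ∃ t ∈ Icc α β, g t = 0)
    (hpos : ∀ t ∈ Icc α s, 0 < g t) : s < firstZero g α β := by
  obtain ⟨hmem, hzero⟩ := firstZero_mem hg h
  by_contra! hle
  exact (hpos _ ⟨hmem.1, hle⟩).ne' hzero

theorem tendsto_firstZero {ι : Type*} {l : Filter ι} {G : ι → ℝ → ℝ}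
    (hG : TendstoUniformlyOn G g l (Icc α β))
    (hGα : ∀ᶠ i in l, ContinuousOn (G i) (Icc α β) ∧ 0 < G i α)
    (hg : ContinuousOn g (Icc α β)) (hα : 0 < g α) (hzero : ∃ t ∈ Icc α β, g t = 0)
    (hβ : firstZero g α β < β) (hsign : ∃ᶠ t in 𝓝[>] firstZero g α β, g t < 0) :
    Tendsto (fun i => firstZero (G i) α β) l (𝓝 (firstZero g α β)) := by
  set T := firstZero g α β
  obtain ⟨hT, hgT⟩ := firstZero_mem hg hzero
  have hαT : α < T := hT.1.lt_of_ne fun h => by rw [← h] at hgT; exact hα.ne' hgT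
  have zero_before : ∀ b > T, ∀ᶠ i in l, ∃ z ∈ Icc α β, z < b ∧ G i z = 0 := by
    intro b hb
    obtain ⟨t, hgt, ht⟩ := (hsign.and_eventually (Ioo_mem_nhdsGT (lt_min hβ hb))).exists
    have htI : t ∈ Icc α β := ⟨hαT.le.trans ht.1.le, ht.2.le.trans (min_le_left _ _)⟩
    filter_upwards [hGα, (hG.tendsto_at htI).eventually_lt_const hgt] with i hi hGt
    obtain ⟨z, hz, hzt, hGz⟩ := exists_zero_of_nonpos hi.1 hi.2 htI hGt.le
    exact ⟨z, hz, hzt.trans_lt (ht.2.trans_le (min_le_right _ _)), hGz⟩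
  refine tendsto_order.2 ⟨fun a ha => ?_, fun b hb => ?_⟩
  · set s := max α ((a + T) / 2)
    have hsT : s < T := max_lt hαT (by linarith)
    obtain ⟨τ, hτ, hmin⟩ := isCompact_Icc.exists_isMinOn (nonempty_Icc.2 (le_max_left α _))
      (hg.mono (Icc_subset_Icc_right (hsT.le.trans hT.2)))
    have hm : 0 < g τ :=
      pos_of_lt_firstZero hg hα ⟨hτ.1, hτ.2.trans (hsT.le.trans hT.2)⟩ (hτ.2.trans_lt hsT)
    filter_upwards [hGα, zero_before β hβ, Metric.tendstoUniformlyOn_iff.1 hG _ hm]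
      with i hi hex hclose
    obtain ⟨z, hz, -, hGz⟩ := hex
    refine (show a < s by linarith [le_max_right α ((a + T) / 2)]).trans
      (lt_firstZero hi.1 ⟨z, hz, hGz⟩ fun t ht => ?_)
    have htI : t ∈ Icc α β := ⟨ht.1, ht.2.trans (hsT.le.trans hT.2)⟩
    have := hclose t htI
    rw [Real.dist_eq, abs_lt] at this
    have hmin_t : g τ ≤ g t := hmin ht
    linarith
  · filter_upwards [zero_before b hb] with i hex
    obtain ⟨z, hz, hzb, hGz⟩ := hex
    exact (firstZero_le hz hGz).trans_lt hzb

end FirstZero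

section IntegralCurves

variable {E : Type*} [NormedAddCommGroup E] [NormedSpace ℝ E] {w : E → E} {K : ℝ≥0}

theorem exists_hasDerivAt_Ioo_of_lipschitzWith [CompleteSpace E] (hw : LipschitzWith K w) {C : ℝ}
    (hC : ∀ x, ‖w x‖ ≤ C) (x₀ : E) {R : ℝ} (hR : 0 ≤ R) :
    ∃ γ : ℝ → E, γ 0 = x₀ ∧ ∀ t ∈ Ioo (-R) R, HasDerivAt γ (w (γ t)) t := by
  have hC0 : 0 ≤ C := (norm_nonneg _).trans (hC x₀)
  have hpl : IsPicardLindelof (fun _ => w) (tmin := -R) (tmax := R) ⟨0, by simp [hR]⟩ x₀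
      ⟨C * R, by positivity⟩ 0 ⟨C, hC0⟩ K :=
    .of_time_independent (fun x _ => hC x) hw.lipschitzOnWith (by simp; exact le_rfl)
  obtain ⟨γ, hγ0, hγ⟩ := hpl.exists_eq_forall_mem_Icc_hasDerivWithinAt₀
  exact ⟨γ, hγ0, fun t ht => (hγ t (Ioo_subset_Icc_self ht)).hasDerivAt (Icc_mem_nhds ht.1 ht.2)⟩

/-- Local solutions on `(-(n+1), n+1)` agree on overlaps, so `t ↦ γ ⌈|t|⌉₊ t` glues them. -/
theorem exists_isIntegralCurve_of_lipschitzWith [CompleteSpace E] (hw : LipschitzWith K w)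
    {C : ℝ} (hC : ∀ x, ‖w x‖ ≤ C) (x₀ : E) :
    ∃ γ : ℝ → E, γ 0 = x₀ ∧ IsIntegralCurve γ (fun _ => w) := by
  choose γ hγ0 hγ using fun n : ℕ =>
    exists_hasDerivAt_Ioo_of_lipschitzWith hw hC x₀ (R := n + 1) (by positivity)
  have agree : ∀ m n : ℕ, m ≤ n → EqOn (γ m) (γ n) (Ioo (-((m : ℝ) + 1)) (m + 1)) := by
    intro m n hmn
    have hmn' : (m : ℝ) + 1 ≤ n + 1 := by gcongr
    exact ODE_solution_unique_of_mem_Ioo (v := fun _ => w) (s := fun _ => univ) (t₀ := 0)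
      (fun _ _ => hw.lipschitzOnWith) ⟨by linarith, by positivity⟩
      (fun t ht => ⟨hγ m t ht, trivial⟩)
      (fun t ht => ⟨hγ n t ⟨by linarith [ht.1], by linarith [ht.2]⟩, trivial⟩) (by rw [hγ0, hγ0])
  refine ⟨fun t => γ ⌈|t|⌉₊ t, by simp [hγ0], fun t => ?_⟩
  set N := ⌈|t|⌉₊ + 1
  have hN : |t| < N := (Nat.le_ceil _).trans_lt (by simp [N])
  have heq : (fun s => γ ⌈|s|⌉₊ s) =ᶠ[𝓝 t] γ N := by
    filter_upwards [Ioo_mem_nhds (abs_lt.1 hN).1 (abs_lt.1 hN).2] with s hs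
    have hs' := Nat.le_ceil |s|
    refine agree _ _ (Nat.ceil_le.2 (abs_lt.2 hs).le) (abs_lt.1 ?_)
    linarith
  have hder := (hγ N t (abs_lt.1 (hN.trans (by simp)))).congr_of_eventuallyEq heq
  rwa [← heq.eq_of_nhds] at hder

theorem IsIntegralCurve.dist_le_mul_exp (hw : LipschitzWith K w) {γ γ' : ℝ → E}
    (hγ : IsIntegralCurve γ (fun _ => w)) (hγ' : IsIntegralCurve γ' (fun _ => w)) {t : ℝ}
    (ht : 0 ≤ t) : dist (γ t) (γ' t) ≤ dist (γ 0) (γ' 0) * Real.exp (K * t) := by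
  simpa using dist_le_of_trajectories_ODE (fun _ => hw) hγ.continuous.continuousOn
    (fun s _ => (hγ s).hasDerivWithinAt) hγ'.continuous.continuousOn
    (fun s _ => (hγ' s).hasDerivWithinAt) le_rfl t ⟨ht, le_rfl⟩

theorem tendstoUniformlyOn_of_isIntegralCurve {X : Type*} [TopologicalSpace X] {Γ : X → ℝ → E}
    (hw : LipschitzWith K w) (hΓ : ∀ x, IsIntegralCurve (Γ x) (fun _ => w))
    (hΓ0 : Continuous fun x => Γ x 0) (x₀ : X) (L : ℝ) :
    TendstoUniformlyOn Γ (Γ x₀) (𝓝 x₀) (Icc 0 L) := by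
  rw [Metric.tendstoUniformlyOn_iff]
  intro ε hε
  filter_upwards [Metric.tendsto_nhds.1 (hΓ0.tendsto x₀) _ (div_pos hε (Real.exp_pos (K * L)))]
    with x hx t ht
  calc dist (Γ x₀ t) (Γ x t) ≤ dist (Γ x₀ 0) (Γ x 0) * Real.exp (K * t) :=
        (hΓ x₀).dist_le_mul_exp hw (hΓ x) ht.1
    _ ≤ dist (Γ x₀ 0) (Γ x 0) * Real.exp (K * L) := by gcongr; exact ht.2
    _ < ε := by rw [dist_comm] at hx; exact (lt_div_iff₀ (Real.exp_pos _)).1 hx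

end IntegralCurves

theorem contDiff_two_of_hasDerivAt {u v w : ℝ → ℝ} (hu : ∀ t, HasDerivAt u (v t) t)
    (hv : ∀ t, HasDerivAt v (w t) t) (hw : Continuous w) : ContDiff ℝ 2 u := by
  have hdu : deriv u = v := funext fun t => (hu t).deriv
  have hdv : deriv v = w := funext fun t => (hv t).deriv
  rw [show (2 : WithTop ℕ∞) = 1 + 1 from rfl, contDiff_succ_iff_deriv, hdu, contDiff_one_iff_deriv,
    hdv]
  exact ⟨fun t => (hu t).differentiableAt, by simp, fun t => (hv t).differentiableAt, hw⟩

namespace Lienard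

def damping (x y : ℝ) : ℝ := x ^ 2 + (x + y) ^ 2 - 1

/-- The equation `u'' + φ(u, u') u' + u = 0` as a first-order system for `(u, u')`. -/
def field (p : ℝ × ℝ) : ℝ × ℝ := (p.2, -p.1 - damping p.1 p.2 * p.2)

def clamp (x : ℝ) : ℝ := max (-3) (min 3 x)

/-- A globally Lipschitz and bounded field agreeing with `field` on the square `[-3, 3]²`. -/
def truncField (p : ℝ × ℝ) : ℝ × ℝ := field (clamp p.1, clamp p.2)

theorem clamp_mem (x : ℝ) : clamp x ∈ Icc (-3) 3 :=
  ⟨le_max_left _ _, max_le (by norm_num) (min_le_left _ _)⟩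

theorem clamp_of_abs_le {x : ℝ} (h : |x| ≤ 3) : clamp x = x := by
  rw [abs_le] at h
  rw [clamp, min_eq_right h.2, max_eq_right h.1]

theorem clamp_neg (x : ℝ) : clamp (-x) = -clamp x := by
  unfold clamp
  grind

theorem truncField_eq_field {p : ℝ × ℝ} (h : p.1 ^ 2 + p.2 ^ 2 ≤ 9) : truncField p = field p := by
  have habs : ∀ x : ℝ, x ^ 2 ≤ 9 → |x| ≤ 3 := fun x hx => by nlinarith [sq_abs x, abs_nonneg x]
  rw [truncField, clamp_of_abs_le (habs _ (by nlinarith [sq_nonneg p.2])),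
    clamp_of_abs_le (habs _ (by nlinarith [sq_nonneg p.1]))]

theorem truncField_neg (p : ℝ × ℝ) : truncField (-p) = -truncField p := by
  simp only [truncField, field, damping, Prod.fst_neg, Prod.snd_neg, clamp_neg, Prod.neg_mk,
    Prod.mk.injEq, true_and]
  ring

theorem exists_lipschitzWith_truncField : ∃ K, LipschitzWith K truncField := by
  have hbox : IsCompact (Icc (-3 : ℝ) 3 ×ˢ Icc (-3 : ℝ) 3) := isCompact_Icc.prod isCompact_Icc
  have hfield : ContDiff ℝ 1 field := by unfold field damping; fun_prop
  obtain ⟨K, hK⟩ :=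
    hfield.locallyLipschitz.locallyLipschitzOn.exists_lipschitzOnWith_of_compact hbox
  have hclamp : LipschitzWith 1 clamp := (LipschitzWith.id.const_min 3).const_max (-3)
  have hclampP := (hclamp.comp LipschitzWith.prod_fst).prodMk (hclamp.comp LipschitzWith.prod_snd)
  exact ⟨_, lipschitzOnWith_univ.1 <| hK.comp hclampP.lipschitzOnWith
    fun p _ => ⟨clamp_mem p.1, clamp_mem p.2⟩⟩

theorem exists_norm_truncField_le : ∃ C, ∀ p, ‖truncField p‖ ≤ C := by
  have hbox : IsCompact (Icc (-3 : ℝ) 3 ×ˢ Icc (-3 : ℝ) 3) := isCompact_Icc.prod isCompact_Icc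
  have hfield : Continuous field := by unfold field damping; fun_prop
  obtain ⟨C, hC⟩ := hbox.exists_bound_of_continuousOn hfield.continuousOn
  exact ⟨C, fun p => hC _ ⟨clamp_mem p.1, clamp_mem p.2⟩⟩

theorem exists_isIntegralCurve_truncField (x : ℝ × ℝ) :
    ∃ γ : ℝ → ℝ × ℝ, γ 0 = x ∧ IsIntegralCurve γ (fun _ => truncField) := by
  obtain ⟨K, hK⟩ := exists_lipschitzWith_truncField
  obtain ⟨C, hC⟩ := exists_norm_truncField_le
  exact exists_isIntegralCurve_of_lipschitzWith hK hC x

noncomputable def orbit (a : ℝ) : ℝ → ℝ × ℝ := (exists_isIntegralCurve_truncField (0, a)).choose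

theorem orbit_zero (a : ℝ) : orbit a 0 = (0, a) :=
  (exists_isIntegralCurve_truncField (0, a)).choose_spec.1

theorem isIntegralCurve_orbit (a : ℝ) : IsIntegralCurve (orbit a) (fun _ => truncField) :=
  (exists_isIntegralCurve_truncField (0, a)).choose_spec.2

theorem hasDerivAt_orbit_fst (a t : ℝ) :
    HasDerivAt (fun s => (orbit a s).1) (truncField (orbit a t)).1 t :=
  (isIntegralCurve_orbit a t).fst

theorem hasDerivAt_orbit_snd (a t : ℝ) :
    HasDerivAt (fun s => (orbit a s).2) (truncField (orbit a t)).2 t :=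
  (isIntegralCurve_orbit a t).snd

theorem tendstoUniformlyOn_orbit (s : Set ℝ) (a₀ L : ℝ) :
    TendstoUniformlyOn orbit (orbit a₀) (𝓝[s] a₀) (Icc 0 L) := by
  obtain ⟨K, hK⟩ := exists_lipschitzWith_truncField
  have hcont : Continuous fun a => orbit a 0 := by simp only [orbit_zero]; fun_prop
  exact fun u hu => (tendstoUniformlyOn_of_isIntegralCurve hK isIntegralCurve_orbit hcont a₀ L u hu
    ).filter_mono nhdsWithin_le_nhds

theorem hasDerivAt_energy (a t : ℝ) (h : (orbit a t).1 ^ 2 + (orbit a t).2 ^ 2 ≤ 9) :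
    HasDerivAt (fun s => (orbit a s).1 ^ 2 + (orbit a s).2 ^ 2)
      (-2 * damping (orbit a t).1 (orbit a t).2 * (orbit a t).2 ^ 2) t := by
  refine (((hasDerivAt_orbit_fst a t).pow 2).add ((hasDerivAt_orbit_snd a t).pow 2)).congr_deriv ?_
  rw [truncField_eq_field h]
  simp only [field]
  ring

theorem orbit_mem_annulus {a : ℝ} (ha : a ∈ Icc (1 / 2 : ℝ) 2) {t : ℝ} (ht : 0 ≤ t) :
    1 / 4 ≤ (orbit a t).1 ^ 2 + (orbit a t).2 ^ 2 ∧ (orbit a t).1 ^ 2 + (orbit a t).2 ^ 2 ≤ 4 := by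
  set E := fun s => (orbit a s).1 ^ 2 + (orbit a s).2 ^ 2
  have hE0 : E 0 = a ^ 2 := by simp [E, orbit_zero]
  have hE : ∀ s ∈ Icc 0 t, HasDerivAt E (deriv E s) s := fun s _ =>
    (((hasDerivAt_orbit_fst a s).pow 2).add
      ((hasDerivAt_orbit_snd a s).pow 2)).differentiableAt.hasDerivAt
  constructor
  · refine ge_of_hasDerivAt_nonneg_on_band (δ := 1 / 8) (by norm_num) hE
      (by rw [hE0]; nlinarith [ha.1]) (fun s _ hband => ?_) t ⟨ht, le_rfl⟩
    rw [(hasDerivAt_energy a s (by linarith [hband.2])).deriv]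
    have : damping (orbit a s).1 (orbit a s).2 ≤ 0 := by
      unfold damping; nlinarith [hband.2, sq_nonneg ((orbit a s).1 - (orbit a s).2)]
    nlinarith [sq_nonneg (orbit a s).2]
  · refine le_of_hasDerivAt_nonpos_on_band (δ := 1 / 2) (by norm_num) hE
      (by rw [hE0]; nlinarith [ha.1, ha.2]) (fun s _ hband => ?_) t ⟨ht, le_rfl⟩
    rw [(hasDerivAt_energy a s (by linarith [hband.2])).deriv]
    have : 0 ≤ damping (orbit a s).1 (orbit a s).2 := by
      unfold damping; nlinarith [hband.1, sq_nonneg (5 * (orbit a s).1 + 3 * (orbit a s).2)]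
    nlinarith [sq_nonneg (orbit a s).2]

structure IsAnnularSolution (u y : ℝ → ℝ) : Prop where
  hasDerivAt_fst : ∀ t, 0 ≤ t → HasDerivAt u (y t) t
  hasDerivAt_snd : ∀ t, 0 ≤ t → HasDerivAt y (-u t - damping (u t) (y t) * y t) t
  mem_annulus : ∀ t, 0 ≤ t → 1 / 4 ≤ u t ^ 2 + y t ^ 2 ∧ u t ^ 2 + y t ^ 2 ≤ 4

theorem isAnnularSolution_orbit {a : ℝ} (ha : a ∈ Icc (1 / 2 : ℝ) 2) :
    IsAnnularSolution (fun t => (orbit a t).1) (fun t => (orbit a t).2) := by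
  have hfield : ∀ t, 0 ≤ t → truncField (orbit a t) = field (orbit a t) := fun t ht =>
    truncField_eq_field (by linarith [(orbit_mem_annulus ha ht).2])
  refine ⟨fun t ht => ?_, fun t ht => ?_, fun t ht => orbit_mem_annulus ha ht⟩
  · simpa [hfield t ht, field] using hasDerivAt_orbit_fst a t
  · simpa [hfield t ht, field] using hasDerivAt_orbit_snd a t

/-- In the closed first quadrant of the annulus, `y - u` decreases at rate at least `1/8`. -/
theorem deriv_sub_le_of_first_quadrant {x y : ℝ} (hx : 0 ≤ x) (hy : 0 ≤ y)
    (h : 1 / 4 ≤ x ^ 2 + y ^ 2) : -x - damping x y * y - y ≤ -1 / 8 := by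
  have hsum : 1 / 2 ≤ x + y := by nlinarith
  have hφ : 1 / 4 ≤ damping x y + 1 := by unfold damping; nlinarith
  nlinarith

/-- In the closed fourth quadrant of the annulus, `y + 8 u` decreases at rate at least `1/2`. -/
theorem deriv_add_le_of_fourth_quadrant {x y : ℝ} (hx : 0 ≤ x) (hy : y ≤ 0)
    (h : 1 / 4 ≤ x ^ 2 + y ^ 2) (h' : x ^ 2 + y ^ 2 ≤ 4) :
    -x - damping x y * y + 8 * y ≤ -1 / 2 := by
  have hdiff : 1 / 2 ≤ x - y := by nlinarith
  have hφ : damping x y ≤ 7 := by unfold damping; nlinarith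
  nlinarith

theorem neg_le_deriv_snd {x y : ℝ} (h : x ^ 2 + y ^ 2 ≤ 4) : -24 ≤ -x - damping x y * y := by
  have hx : |x| ≤ 2 := by nlinarith [sq_abs x, abs_nonneg x, sq_nonneg y]
  have hy : |y| ≤ 2 := by nlinarith [sq_abs y, abs_nonneg y, sq_nonneg x]
  have hφ : |damping x y| ≤ 11 := by
    rw [abs_le]; unfold damping; constructor <;> nlinarith [sq_nonneg (x - y), sq_nonneg (x + y)]
  have : |damping x y * y| ≤ 22 := by
    rw [abs_mul]; nlinarith [abs_nonneg (damping x y), abs_nonneg y]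
  linarith [neg_abs_le x, le_abs_self (damping x y * y), abs_le.1 hx, abs_le.1 this]

namespace IsAnnularSolution

variable {u y : ℝ → ℝ}

theorem fst_le_two (S : IsAnnularSolution u y) {t : ℝ} (ht : 0 ≤ t) : u t ≤ 2 := by
  nlinarith [S.mem_annulus t ht, sq_nonneg (y t)]

theorem snd_le_two (S : IsAnnularSolution u y) {t : ℝ} (ht : 0 ≤ t) : y t ≤ 2 := by
  nlinarith [S.mem_annulus t ht, sq_nonneg (u t)]

theorem neg_two_le_snd (S : IsAnnularSolution u y) {t : ℝ} (ht : 0 ≤ t) : -2 ≤ y t := by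
  nlinarith [S.mem_annulus t ht, sq_nonneg (u t)]

theorem exists_exit_first_quadrant (S : IsAnnularSolution u y) {s : ℝ} (hs : 0 ≤ s) :
    ∃ t ∈ Icc s (s + 33), u t < 0 ∨ y t < 0 := by
  by_contra! h
  have hdecay := le_add_mul_of_hasDerivAt_le (f := fun t => y t - u t) (C := -1 / 8)
    (by linarith) (fun t ht => (S.hasDerivAt_snd t (hs.trans ht.1)).sub
      (S.hasDerivAt_fst t (hs.trans ht.1)))
    (fun t ht => deriv_sub_le_of_first_quadrant (h t (Ico_subset_Icc_self ht)).1
      (h t (Ico_subset_Icc_self ht)).2 (S.mem_annulus t (hs.trans ht.1)).1)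
  have hend := h (s + 33) ⟨by linarith, le_rfl⟩
  linarith [h s ⟨le_rfl, by linarith⟩, S.snd_le_two hs, S.fst_le_two (t := s + 33) (by linarith)]

theorem exists_exit_fourth_quadrant (S : IsAnnularSolution u y) {s : ℝ} (hs : 0 ≤ s) :
    ∃ t ∈ Icc s (s + 37), u t < 0 ∨ 0 < y t := by
  by_contra! h
  have hdecay := le_add_mul_of_hasDerivAt_le (f := fun t => y t + 8 * u t) (C := -1 / 2)
    (by linarith) (fun t ht => (S.hasDerivAt_snd t (hs.trans ht.1)).add
      ((S.hasDerivAt_fst t (hs.trans ht.1)).const_mul 8))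
    (fun t ht => deriv_add_le_of_fourth_quadrant (h t (Ico_subset_Icc_self ht)).1
      (h t (Ico_subset_Icc_self ht)).2 (S.mem_annulus t (hs.trans ht.1)).1
      (S.mem_annulus t (hs.trans ht.1)).2)
  have hend := h (s + 37) ⟨by linarith, le_rfl⟩
  linarith [h s ⟨le_rfl, by linarith⟩, S.fst_le_two hs,
    S.neg_two_le_snd (t := s + 37) (by linarith)]

/-- While `u > 0`, the orbit cannot cross the `u`-axis upwards, since there `y' = -u`. -/
theorem snd_nonpos_of_fst_pos (S : IsAnnularSolution u y) {s b : ℝ} (hs : 0 ≤ s) (hys : y s < 0)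
    (hu : ∀ t ∈ Ioc s b, 0 < u t) : ∀ t ∈ Icc s b, y t ≤ 0 := by
  refine image_le_of_deriv_right_lt_deriv_boundary (B := fun _ => 0) (B' := fun _ => 0)
    (HasDerivAt.continuousOn fun t ht => S.hasDerivAt_snd t (hs.trans ht.1))
    (fun t ht => (S.hasDerivAt_snd t (hs.trans ht.1)).hasDerivWithinAt) hys.le
    (fun _ => hasDerivAt_const _ _) fun t ht hyt => ?_
  have hts : s < t := ht.1.lt_of_ne fun h => by rw [← h] at hyt; exact hys.ne hyt
  simp only [hyt, mul_zero, sub_zero]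
  linarith [hu t ⟨hts, ht.2.le⟩]

theorem exists_fst_nonpos (S : IsAnnularSolution u y) (h0 : u 0 = 0) :
    ∃ t ∈ Ioc 0 70, u t ≤ 0 := by
  by_contra! h
  have hu : ∀ t ∈ Icc (0 : ℝ) 70, 0 ≤ u t := fun t ht =>
    ht.1.eq_or_lt.elim (fun h' => h' ▸ h0.ge) fun h' => (h t ⟨h', ht.2⟩).le
  obtain ⟨t₁, ht₁, hexit₁⟩ := S.exists_exit_first_quadrant le_rfl
  have hyt₁ : y t₁ < 0 := hexit₁.resolve_left (hu t₁ ⟨ht₁.1, by linarith [ht₁.2]⟩).not_gt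
  have hy := S.snd_nonpos_of_fst_pos (b := 70) ht₁.1 hyt₁ fun t ht =>
    h t ⟨ht₁.1.trans_lt ht.1, ht.2⟩
  obtain ⟨t₂, ht₂, hexit₂⟩ := S.exists_exit_fourth_quadrant ht₁.1
  have ht₂I : t₂ ∈ Icc t₁ 70 := ⟨ht₂.1, by linarith [ht₂.2, ht₁.2]⟩
  exact hexit₂.elim (hu t₂ ⟨ht₁.1.trans ht₂.1, ht₂I.2⟩).not_gt (hy t₂ ht₂I).not_gt

theorem div_le_fst (S : IsAnnularSolution u y) (h0 : u 0 = 0) (hy0 : 1 / 2 ≤ y 0) :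
    ∀ t ∈ Icc (0 : ℝ) (1 / 50), t / 50 ≤ u t := by
  intro t ht
  have hy : ∀ s ∈ Icc (0 : ℝ) (1 / 50), 1 / 50 ≤ y s := fun s hs => by
    have := add_mul_le_of_le_hasDerivAt (f := y) (C := -24) hs.1
      (fun r hr => S.hasDerivAt_snd r hr.1)
      (fun r hr => neg_le_deriv_snd (S.mem_annulus r hr.1).2)
    linarith [hs.2]
  have := add_mul_le_of_le_hasDerivAt (f := u) (C := 1 / 50) ht.1
    (fun r hr => S.hasDerivAt_fst r hr.1)
    (fun r hr => hy r ⟨hr.1, hr.2.le.trans ht.2⟩)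
  linarith

end IsAnnularSolution

theorem continuous_orbit_fst (a : ℝ) : Continuous fun t => (orbit a t).1 :=
  (isIntegralCurve_orbit a).continuous.fst

theorem orbit_fst_pos_of_mem_Ioc {a : ℝ} (ha : a ∈ Icc (1 / 2 : ℝ) 2) {t : ℝ}
    (ht : t ∈ Ioc (0 : ℝ) (1 / 50)) : 0 < (orbit a t).1 := by
  have := (isAnnularSolution_orbit ha).div_le_fst (by simp [orbit_zero])
    (by simpa [orbit_zero] using ha.1)
    t (Ioc_subset_Icc_self ht)
  linarith [ht.1]

/-- Searching from `t = 1/50` skips the starting point `(0, a)` on the `y`-axis. -/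
noncomputable def returnTime (a : ℝ) : ℝ := firstZero (fun t => (orbit a t).1) (1 / 50) 100

/-- Half a turn carries `(0, a)` to `(0, -returnMap a)`. -/
noncomputable def returnMap (a : ℝ) : ℝ := -(orbit a (returnTime a)).2

theorem exists_orbit_fst_eq_zero {a : ℝ} (ha : a ∈ Icc (1 / 2 : ℝ) 2) :
    ∃ t ∈ Icc (1 / 50 : ℝ) 100, t ≤ 70 ∧ (orbit a t).1 = 0 := by
  obtain ⟨t, ht, hut⟩ := (isAnnularSolution_orbit ha).exists_fst_nonpos (by simp [orbit_zero])
  have ht50 : 1 / 50 ≤ t := by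
    by_contra! h
    exact (orbit_fst_pos_of_mem_Ioc ha ⟨ht.1, h.le⟩).not_ge hut
  obtain ⟨z, hz, hzt, hz0⟩ := exists_zero_of_nonpos (β := 100) (continuous_orbit_fst a).continuousOn
    (orbit_fst_pos_of_mem_Ioc ha ⟨by norm_num, le_rfl⟩) ⟨ht50, by linarith [ht.2]⟩ hut
  exact ⟨z, hz, hzt.trans ht.2, hz0⟩

theorem returnTime_spec {a : ℝ} (ha : a ∈ Icc (1 / 2 : ℝ) 2) :
    returnTime a ∈ Ioc (1 / 50 : ℝ) 70 ∧ (orbit a (returnTime a)).1 = 0 ∧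
      ∀ t ∈ Ico (1 / 50 : ℝ) (returnTime a), 0 < (orbit a t).1 := by
  unfold returnTime
  obtain ⟨t, ht, ht70, hzero⟩ := exists_orbit_fst_eq_zero ha
  have hpos := orbit_fst_pos_of_mem_Ioc ha ⟨by norm_num, le_rfl⟩
  obtain ⟨hmem, hT⟩ := firstZero_mem (continuous_orbit_fst a).continuousOn ⟨t, ht, hzero⟩
  refine ⟨⟨hmem.1.lt_of_ne fun h => ?_, (firstZero_le ht hzero).trans ht70⟩, hT, fun s hs => ?_⟩
  · rw [← h] at hT; exact hpos.ne' hT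
  · exact pos_of_lt_firstZero (continuous_orbit_fst a).continuousOn hpos
      ⟨hs.1, hs.2.le.trans hmem.2⟩ hs.2

theorem orbit_returnTime_snd_mem {a : ℝ} (ha : a ∈ Icc (1 / 2 : ℝ) 2) :
    (orbit a (returnTime a)).2 ∈ Icc (-2 : ℝ) (-1 / 2) := by
  obtain ⟨hT, hzero, hpos⟩ := returnTime_spec ha
  have hnonpos : (orbit a (returnTime a)).2 ≤ 0 := by
    refine ((isAnnularSolution_orbit ha).hasDerivAt_fst _
      (by linarith [hT.1])).nonpos_of_eventually_pos_left hzero ?_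
    filter_upwards [Ioo_mem_nhdsLT hT.1] with s hs using hpos s ⟨hs.1.le, hs.2⟩
  have hann := orbit_mem_annulus ha (t := returnTime a) (by linarith [hT.1])
  rw [hzero] at hann
  constructor <;> nlinarith [hann.1, hann.2]

theorem returnMap_mem {a : ℝ} (ha : a ∈ Icc (1 / 2 : ℝ) 2) : returnMap a ∈ Icc (1 / 2 : ℝ) 2 := by
  have := orbit_returnTime_snd_mem ha
  constructor <;> simp only [returnMap] <;> linarith [this.1, this.2]

theorem tendsto_returnTime {a₀ : ℝ} (ha₀ : a₀ ∈ Icc (1 / 2 : ℝ) 2) :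
    Tendsto returnTime (𝓝[Icc (1 / 2) 2] a₀) (𝓝 (returnTime a₀)) := by
  obtain ⟨hT, hzero, -⟩ := returnTime_spec ha₀
  obtain ⟨t, ht, -, ht0⟩ := exists_orbit_fst_eq_zero ha₀
  have hderiv := (isAnnularSolution_orbit ha₀).hasDerivAt_fst (returnTime a₀) (by linarith [hT.1])
  refine tendsto_firstZero ((uniformContinuous_fst.comp_tendstoUniformlyOn
      (tendstoUniformlyOn_orbit _ a₀ 100)).mono (Icc_subset_Icc_left (by norm_num)))
    ?_ (continuous_orbit_fst a₀).continuousOn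
    (orbit_fst_pos_of_mem_Ioc ha₀ ⟨by norm_num, le_rfl⟩) ⟨t, ht, ht0⟩
    (hT.2.trans_lt (by norm_num))
    (hderiv.eventually_neg_right hzero (by linarith [(orbit_returnTime_snd_mem ha₀).2])).frequently
  filter_upwards [self_mem_nhdsWithin] with a ha using
    ⟨(continuous_orbit_fst a).continuousOn, orbit_fst_pos_of_mem_Ioc ha ⟨by norm_num, le_rfl⟩⟩

theorem continuousOn_returnMap : ContinuousOn returnMap (Icc (1 / 2) 2) := by
  intro a₀ ha₀
  have hT : Tendsto returnTime (𝓝[Icc (1 / 2) 2] a₀) (𝓝[Icc 0 100] (returnTime a₀)) := by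
    refine tendsto_nhdsWithin_iff.2 ⟨tendsto_returnTime ha₀, ?_⟩
    filter_upwards [self_mem_nhdsWithin] with a ha
    exact ⟨by linarith [(returnTime_spec ha).1.1], by linarith [(returnTime_spec ha).1.2]⟩
  exact ((uniformContinuous_snd.comp_tendstoUniformlyOn
    (tendstoUniformlyOn_orbit _ a₀ 100)).tendsto_comp
      (isIntegralCurve_orbit a₀).continuous.snd.continuousWithinAt hT).neg

theorem exists_returnMap_eq : ∃ a ∈ Icc (1 / 2 : ℝ) 2, returnMap a = a := by
  have hlo := returnMap_mem (a := 1 / 2) ⟨le_rfl, by norm_num⟩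
  have hhi := returnMap_mem (a := 2) ⟨by norm_num, le_rfl⟩
  obtain ⟨a, ha, h⟩ := intermediate_value_Icc' (by norm_num : (1 / 2 : ℝ) ≤ 2)
    (continuousOn_returnMap.sub continuousOn_id)
    (show (0 : ℝ) ∈ Icc (returnMap 2 - 2) (returnMap (1 / 2) - 1 / 2) from
      ⟨by linarith [hhi.2], by linarith [hlo.1]⟩)
  exact ⟨a, ha, sub_eq_zero.1 h⟩

/-- The system is odd, so `t ↦ -γ(t + T)` is again a solution; at a fixed point of the return
map it starts at the same point as `γ`. -/
theorem antiperiodic_orbit {a : ℝ} (ha : a ∈ Icc (1 / 2 : ℝ) 2) (hfix : returnMap a = a) :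
    Function.Antiperiodic (orbit a) (returnTime a) := by
  obtain ⟨K, hK⟩ := exists_lipschitzWith_truncField
  have hT : orbit a (returnTime a) = (0, -a) :=
    Prod.ext (returnTime_spec ha).2.1 (by rw [returnMap] at hfix; linarith)
  have hshift : ∀ t, HasDerivAt (fun s => -orbit a (s + returnTime a))
      (truncField (-orbit a (t + returnTime a))) t := fun t => by
    rw [truncField_neg]
    exact ((isIntegralCurve_orbit a).comp_add (returnTime a) t).neg
  have := ODE_solution_unique_univ (v := fun _ => truncField) (s := fun _ => univ) (t₀ := 0)
    (fun _ => hK.lipschitzOnWith) (fun t => ⟨hshift t, trivial⟩)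
    (fun t => ⟨isIntegralCurve_orbit a t, trivial⟩)
    (show -orbit a (0 + returnTime a) = orbit a 0 by rw [zero_add, hT, orbit_zero]; simp)
  intro t
  rw [← neg_neg (orbit a (t + returnTime a))]
  exact congrArg Neg.neg (congrFun this t)

theorem isIntegralCurve_field_orbit {a : ℝ} (ha : a ∈ Icc (1 / 2 : ℝ) 2) (hfix : returnMap a = a) :
    IsIntegralCurve (orbit a) (fun _ => field) := by
  intro t
  obtain ⟨s, hs, hst⟩ := (antiperiodic_orbit ha hfix).periodic_two_mul.exists_mem_Ico₀
    (by linarith [(returnTime_spec ha).1.1]) t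
  have h : HasDerivAt (orbit a) (truncField (orbit a t)) t := isIntegralCurve_orbit a t
  rwa [truncField_eq_field (by rw [hst]; linarith [(orbit_mem_annulus ha hs.1).2])] at h

theorem tendsto_integral_id_atTop : Tendsto (fun x : ℝ => ∫ s in (0 : ℝ)..x, s) atTop atTop := by
  simp only [integral_id, ne_eq, OfNat.ofNat_ne_zero, not_false_eq_true, zero_pow, sub_zero]
  exact (tendsto_pow_atTop two_ne_zero).atTop_div_const two_pos

theorem integral_damping_ge {b : ℝ} (hb : 1 ≤ b) {y : ℝ → ℝ} (hanti : AntitoneOn y (Icc 1 b))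
    (hpos : ∀ x ∈ Icc 1 b, 0 < y x) :
    2 * ((b ^ 3 - 1) / 3) - (b - 1) ≤ ∫ x in (1 : ℝ)..b, damping x (y x) := by
  rw [← uIcc_of_le hb] at hanti
  have hy2 : AntitoneOn (fun x => y x ^ 2) (uIcc 1 b) := fun s hs t ht hst =>
    pow_le_pow_left₀ (hpos t (uIcc_of_le hb ▸ ht)).le (hanti hs ht hst) 2
  have hpoly : IntervalIntegrable (fun x : ℝ => 2 * x ^ 2 - 1) volume 1 b :=
    (by fun_prop : Continuous fun x : ℝ => 2 * x ^ 2 - 1).intervalIntegrable _ _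
  have hint : IntervalIntegrable (fun x => damping x (y x)) volume 1 b := by
    have : (fun x => damping x (y x)) = fun x => (2 * x ^ 2 - 1) + 2 * (x * y x) + y x ^ 2 := by
      funext x; unfold damping; ring
    rw [this]
    exact (hpoly.add ((hanti.intervalIntegrable.continuousOn_mul continuousOn_id).const_mul 2)).add
      hy2.intervalIntegrable
  calc 2 * ((b ^ 3 - 1) / 3) - (b - 1) = ∫ x in (1 : ℝ)..b, (2 * x ^ 2 - 1) := by
        rw [intervalIntegral.integral_sub
          ((by fun_prop : Continuous fun x : ℝ => 2 * x ^ 2).intervalIntegrable _ _)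
          intervalIntegrable_const, intervalIntegral.integral_const_mul, integral_pow]
        simp
        ring
    _ ≤ ∫ x in (1 : ℝ)..b, damping x (y x) :=
        intervalIntegral.integral_mono_on hb hpoly hint fun x hx => by
          unfold damping; nlinarith [hpos x hx, hx.1]

theorem levinsonSmithWith_damping :
    LevinsonSmithWith damping (fun x => x) 1 (1 + (60 : ℝ) ^ ((1 : ℝ) / 3)) 1 := by
  have hc : ((60 : ℝ) ^ ((1 : ℝ) / 3)) ^ 3 = 60 := by
    rw [← Real.rpow_natCast, ← Real.rpow_mul (by norm_num)]; norm_num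
  have hc0 : 0 < (60 : ℝ) ^ ((1 : ℝ) / 3) := by positivity
  refine ⟨fun x hx => mul_self_pos.2 hx, tendsto_integral_id_atTop, by norm_num [damping],
    by norm_num, by linarith, by norm_num, fun x y hx => ?_, fun x y _ => ?_,
    fun y hanti hpos => ?_⟩
  · unfold damping; nlinarith [sq_abs x, sq_nonneg (x + y)]
  · unfold damping; nlinarith [sq_nonneg x, sq_nonneg (x + y)]
  · refine le_trans ?_ (integral_damping_ge (by linarith) hanti.antitoneOn hpos)
    nlinarith

end Lienard

/-- The equation `u'' + [u² + (u + u')² − 1]u' + u = 0` has at least one non-constant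
periodic solution; indeed `φ(x,y) = x² + (x+y)² − 1` and `ψ(x) = x` satisfy the
Levinson–Smith conditions `C_LS` with `x₀ = 1`, `M = 1` and `x₁ = 1 + 60^{1/3}`. -/
theorem exists_periodic_solution_special_lienard :
    (∃ (u₀ : ℝ → ℝ) (τ₀ : ℝ), 0 < τ₀ ∧ ContDiff ℝ 2 u₀ ∧
      (∀ t : ℝ, deriv (deriv u₀) t
          + ((u₀ t) ^ 2 + (u₀ t + deriv u₀ t) ^ 2 - 1) * deriv u₀ t + u₀ t = 0) ∧
      (∀ t : ℝ, u₀ (t + τ₀) = u₀ t) ∧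
      (∃ t₁ t₂ : ℝ, u₀ t₁ ≠ u₀ t₂)) ∧
    LevinsonSmithWith (fun x y => x ^ 2 + (x + y) ^ 2 - 1) (fun x => x)
      1 (1 + (60 : ℝ) ^ ((1 : ℝ) / 3)) 1 := by
  refine ⟨?_, Lienard.levinsonSmithWith_damping⟩
  obtain ⟨a, ha, hfix⟩ := Lienard.exists_returnMap_eq
  set γ := Lienard.orbit a
  have hγ := Lienard.isIntegralCurve_field_orbit ha hfix
  have hu : ∀ t, HasDerivAt (fun s => (γ s).1) (γ t).2 t := fun t => (hγ t).fst
  have hy : ∀ t, HasDerivAt (fun s => (γ s).2)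
      (-(γ t).1 - Lienard.damping (γ t).1 (γ t).2 * (γ t).2) t := fun t => (hγ t).snd
  have hcont : Continuous γ := hγ.continuous
  refine ⟨fun t => (γ t).1, 2 * Lienard.returnTime a,
    by linarith [(Lienard.returnTime_spec ha).1.1],
    contDiff_two_of_hasDerivAt hu hy (by unfold Lienard.damping; fun_prop), fun t => ?_,
    fun t => congrArg Prod.fst ((Lienard.antiperiodic_orbit ha hfix).periodic_two_mul t),
    1 / 50, 0, ?_⟩
  · rw [funext fun s => (hu s).deriv, (hy t).deriv]
    unfold Lienard.damping
    ring
  · simp only [γ, Lienard.orbit_zero]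
    exact (Lienard.orbit_fst_pos_of_mem_Ioc ha ⟨by norm_num, le_rfl⟩).ne'
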